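/- Let δ ≥ 0 and p ∈ (1,∞), and define S(A) = (δ + |A^sym|)^(p-2) A^sym and F(A) = (δ + |A^sym|)^((p-2)/2) A^sym for d×d real matrices A, where A^sym = (A + Aᵀ)/2. Then there exist constants c, C > 0 depending only on p (and not on δ) such that for all d×d matrices A, B: c·|F(A) - F(B)|² ≤ (S(A) - S(B)) : (A - B) ≤ C·|F(A) - F(B)|², where : denotes the Frobenius inner product. -/
import Mathlib


open Matrix in
/-- Symmetric part of a square matrix. -/
noncomputable def msym {d : ℕ} (A : Matrix (Fin d) (Fin d) ℝ) : Matrix (Fin d) (Fin d) ℝ :=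
  (1/2 : ℝ) • (A + Aᵀ)

/-- Frobenius norm of a matrix. -/
noncomputable def frob {d : ℕ} (A : Matrix (Fin d) (Fin d) ℝ) : ℝ :=
  Real.sqrt (∑ i, ∑ j, (A i j) ^ 2)

/-- Frobenius inner product of two matrices. -/
noncomputable def frobInner {d : ℕ} (A B : Matrix (Fin d) (Fin d) ℝ) : ℝ :=
  ∑ i, ∑ j, A i j * B i j

/-- The extra-stress tensor `S(A) = (δ + |A^sym|)^(p-2) A^sym` (with `ν₀ = 1`). -/
noncomputable def Smap (δ p : ℝ) {d : ℕ} (A : Matrix (Fin d) (Fin d) ℝ) :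
    Matrix (Fin d) (Fin d) ℝ :=
  ((δ + frob (msym A)) ^ (p - 2)) • msym A

/-- The nonlinear quantity `F(A) = (δ + |A^sym|)^((p-2)/2) A^sym`. -/
noncomputable def Fmap (δ p : ℝ) {d : ℕ} (A : Matrix (Fin d) (Fin d) ℝ) :
    Matrix (Fin d) (Fin d) ℝ :=
  ((δ + frob (msym A)) ^ ((p - 2) / 2)) • msym A


/-- Scalar lower bound: for `q > -1`, `δ ≥ 0`, `0 ≤ b ≤ a`:
`min 1 (q+1) * (δ+a)^q * (a-b) ≤ (δ+a)^q a - (δ+b)^q b`. -/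
lemma scalar_low {q : ℝ} (hq : -1 < q) {δ a b : ℝ} (hδ : 0 ≤ δ) (hb : 0 ≤ b) (hba : b ≤ a) :
    min 1 (q + 1) * ((δ + a) ^ q * (a - b)) ≤ (δ + a) ^ q * a - (δ + b) ^ q * b := by
  have hx : (0:ℝ) ≤ δ + a := by linarith
  have hy : (0:ℝ) ≤ δ + b := by linarith
  have hyx : δ + b ≤ δ + a := by linarith
  have hbY : b ≤ δ + b := by linarith
  have hEx : (0:ℝ) ≤ (δ + a) ^ q := Real.rpow_nonneg hx q
  have hmin1 : min 1 (q + 1) ≤ 1 := min_le_left _ _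
  rcases le_or_gt 0 q with hq0 | hq0
  · -- q ≥ 0 : monotone coefficient
    have h1 : (δ + b) ^ q ≤ (δ + a) ^ q := Real.rpow_le_rpow hy hyx hq0
    have h2 : (δ + b) ^ q * b ≤ (δ + a) ^ q * b := mul_le_mul_of_nonneg_right h1 hb
    have h3 : (0:ℝ) ≤ (δ + a) ^ q * (a - b) := mul_nonneg hEx (by linarith)
    nlinarith [mul_le_mul_of_nonneg_right hmin1 h3]
  · -- -1 < q < 0
    have hmin : min 1 (q + 1) = q + 1 := min_eq_right (by linarith)
    rw [hmin]
    by_cases hy0 : δ + b = 0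
    · -- then b = 0 and δ = 0
      have hb0 : b = 0 := by linarith
      have hq1 : (0:ℝ) < q + 1 := by linarith
      have h0 : (0:ℝ) ≤ (δ + a) ^ q * a := mul_nonneg hEx (by linarith)
      rw [hb0]
      nlinarith
    · have hy0' : (0:ℝ) < δ + b := lt_of_le_of_ne hy (Ne.symm hy0)
      have hx0' : (0:ℝ) < δ + a := lt_of_lt_of_le hy0' hyx
      set x := δ + a with hxdef
      set y := δ + b with hydef
      set r := y / x with hrdef
      have hr0 : 0 < r := div_pos hy0' hx0'
      have hr1 : r ≤ 1 := (div_le_one hx0').mpr hyx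
      have hrx : r * x = y := div_mul_cancel₀ y (ne_of_gt hx0')
      -- Bernoulli (concave): r^(q+1) ≤ 1 + (q+1)(r-1)
      have hbern : r ^ (q + 1) ≤ 1 + (q + 1) * (r - 1) := by
        have := rpow_one_add_le_one_add_mul_self (s := r - 1) (by linarith) (p := q + 1)
          (by linarith) (by linarith)
        simpa using this
      -- y^q = r^q * x^q ; r^(q+1) = r^q * r
      have hyq : y ^ q = r ^ q * x ^ q := by
        rw [← hrx, Real.mul_rpow hr0.le hx0'.le]
      have hrq1 : r ^ (q + 1) = r ^ q * r := by
        rw [Real.rpow_add hr0, Real.rpow_one]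
      -- key : (y^q - x^q) * y ≤ (-q) * x^q * (x - y)
      have hkey : (y ^ q - x ^ q) * y ≤ (-q) * (x ^ q * (x - y)) := by
        have h1 : (r ^ q * r - r) * (x ^ q * x) ≤ ((-q) * (1 - r)) * (x ^ q * x) := by
          apply mul_le_mul_of_nonneg_right _ (mul_nonneg hEx hx0'.le)
          rw [← hrq1]; linarith
        calc (y ^ q - x ^ q) * y = (r ^ q * r - r) * (x ^ q * x) := by
              rw [hyq, ← hrx]; ring
          _ ≤ ((-q) * (1 - r)) * (x ^ q * x) := h1
          _ = (-q) * (x ^ q * (x - y)) := by rw [← hrx]; ring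
      -- x^q ≤ y^q
      have hle : x ^ q ≤ y ^ q := Real.rpow_le_rpow_of_nonpos hy0' hyx hq0.le
      have hmono : (y ^ q - x ^ q) * b ≤ (y ^ q - x ^ q) * y :=
        mul_le_mul_of_nonneg_left hbY (by linarith)
      have hxy : x - y = a - b := by rw [hxdef, hydef]; ring
      rw [hxy] at hkey
      linarith [hkey, hmono]

/-- Scalar upper bound. -/
lemma scalar_up {q : ℝ} (hq : -1 < q) {δ a b : ℝ} (hδ : 0 ≤ δ) (hb : 0 ≤ b) (hba : b ≤ a) :
    (δ + a) ^ q * a - (δ + b) ^ q * b ≤ (1 + max q 1) * ((δ + a) ^ q * (a - b)) := by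
  have hx : (0:ℝ) ≤ δ + a := by linarith
  have hy : (0:ℝ) ≤ δ + b := by linarith
  have hyx : δ + b ≤ δ + a := by linarith
  have hbY : b ≤ δ + b := by linarith
  have hEx : (0:ℝ) ≤ (δ + a) ^ q := Real.rpow_nonneg hx q
  have hD : (0:ℝ) ≤ (δ + a) ^ q * (a - b) := mul_nonneg hEx (by linarith)
  have hmax1 : (1:ℝ) ≤ max q 1 := le_max_right _ _
  rcases le_or_gt 0 q with hq0 | hq0
  · -- q ≥ 0
    -- subclaim : ((δ+a)^q - (δ+b)^q) * (δ+b) ≤ max q 1 * ((δ+a)^q * (a - b))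
    set x := δ + a with hxdef
    set y := δ + b with hydef
    have hsub : (x ^ q - y ^ q) * y ≤ max q 1 * (x ^ q * (x - y)) := by
      by_cases hx0 : x = 0
      · have hy0 : y = 0 := le_antisymm (hx0 ▸ hyx) hy
        rw [hx0, hy0]; simp
      · have hx0' : (0:ℝ) < x := lt_of_le_of_ne hx (Ne.symm hx0)
        set r := y / x with hrdef
        have hr0 : 0 ≤ r := div_nonneg hy hx0'.le
        have hr1 : r ≤ 1 := (div_le_one hx0').mpr hyx
        have hrx : r * x = y := div_mul_cancel₀ y (ne_of_gt hx0')
        have hyq : y ^ q = r ^ q * x ^ q := by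
          rw [← hrx, Real.mul_rpow hr0 hx0'.le]
        -- core : (1 - r^q) * r ≤ max q 1 * (1 - r)
        have hcore : (1 - r ^ q) * r ≤ max q 1 * (1 - r) := by
          rcases le_or_gt q 1 with hq1 | hq1
          · -- q ≤ 1 : r ≤ r^q
            rcases eq_or_lt_of_le hr0 with hr0' | hr0'
            · rw [← hr0']
              simp only [mul_zero, sub_zero, mul_one]
              exact le_trans zero_le_one hmax1
            · have h1 : r ^ (1:ℝ) ≤ r ^ q := Real.rpow_le_rpow_of_exponent_ge hr0' hr1 hq1
              rw [Real.rpow_one] at h1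
              nlinarith
          · -- q ≥ 1 : Bernoulli convex
            have hbern : 1 + q * (r - 1) ≤ r ^ q := by
              have := one_add_mul_self_le_rpow_one_add (s := r - 1) (by linarith) (p := q) hq1.le
              simpa using this
            have hmaxq : max q 1 = q := max_eq_left hq1.le
            rw [hmaxq]
            have h2 : (1 - r ^ q) * r ≤ (q * (1 - r)) * r :=
              mul_le_mul_of_nonneg_right (by linarith) hr0
            have h3 : (q * (1 - r)) * r ≤ (q * (1 - r)) * 1 :=
              mul_le_mul_of_nonneg_left hr1 (by nlinarith)
            linarith
        have h1 : ((1 - r ^ q) * r) * (x ^ q * x) ≤ (max q 1 * (1 - r)) * (x ^ q * x) :=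
          mul_le_mul_of_nonneg_right hcore (mul_nonneg hEx hx0'.le)
        calc (x ^ q - y ^ q) * y = ((1 - r ^ q) * r) * (x ^ q * x) := by
              rw [hyq, ← hrx]; ring
          _ ≤ (max q 1 * (1 - r)) * (x ^ q * x) := h1
          _ = max q 1 * (x ^ q * (x - y)) := by rw [← hrx]; ring
    have hle : y ^ q ≤ x ^ q := Real.rpow_le_rpow hy hyx hq0
    have hmono : (x ^ q - y ^ q) * b ≤ (x ^ q - y ^ q) * y :=
      mul_le_mul_of_nonneg_left hbY (by linarith)
    have hxy : x - y = a - b := by rw [hxdef, hydef]; ring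
    rw [hxy] at hsub
    linarith [hsub, hmono]
  · -- q < 0 : coefficient antitone, easy
    have h1 : (δ + a) ^ q * b ≤ (δ + b) ^ q * b := by
      rcases eq_or_lt_of_le hb with hb0 | hb0
      · rw [← hb0]; simp
      · have hy0' : (0:ℝ) < δ + b := by linarith
        exact mul_le_mul_of_nonneg_right
          (Real.rpow_le_rpow_of_nonpos hy0' hyx hq0.le) hb
    nlinarith [mul_le_mul_of_nonneg_right hmax1 hD]

lemma affine_nonneg {A B e t : ℝ} (ht : |t| ≤ e) (h1 : 0 ≤ A - B * e) (h2 : 0 ≤ A + B * e) :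
    0 ≤ A - B * t := by
  obtain ⟨h3, h4⟩ := abs_le.mp ht
  rcases le_total 0 B with hB | hB
  · nlinarith
  · nlinarith

set_option maxHeartbeats 1000000 in
/-- Core scalar inequality behind the S/F equivalence. -/
lemma core_SF (p : ℝ) (hp : 1 < p) : ∃ c C : ℝ, 0 < c ∧ 0 < C ∧
    ∀ δ : ℝ, 0 ≤ δ → ∀ a b t : ℝ, 0 ≤ b → b ≤ a → |t| ≤ a * b →
      c * (((δ + a) ^ ((p - 2) / 2)) ^ 2 * a ^ 2 + ((δ + b) ^ ((p - 2) / 2)) ^ 2 * b ^ 2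
            - 2 * ((δ + a) ^ ((p - 2) / 2)) * ((δ + b) ^ ((p - 2) / 2)) * t)
          ≤ (δ + a) ^ (p - 2) * a ^ 2 + (δ + b) ^ (p - 2) * b ^ 2
            - ((δ + a) ^ (p - 2) + (δ + b) ^ (p - 2)) * t ∧
      (δ + a) ^ (p - 2) * a ^ 2 + (δ + b) ^ (p - 2) * b ^ 2
            - ((δ + a) ^ (p - 2) + (δ + b) ^ (p - 2)) * t
          ≤ C * (((δ + a) ^ ((p - 2) / 2)) ^ 2 * a ^ 2 + ((δ + b) ^ ((p - 2) / 2)) ^ 2 * b ^ 2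
            - 2 * ((δ + a) ^ ((p - 2) / 2)) * ((δ + b) ^ ((p - 2) / 2)) * t) := by
  set q : ℝ := p - 2 with hqdef
  have hq : -1 < q := by simp only [hqdef]; linarith
  have hq2 : -1 < q / 2 := by linarith
  set cφ : ℝ := min 1 (q + 1) with hcφdef
  set Cφ : ℝ := 1 + max q 1 with hCφdef
  set cψ : ℝ := min 1 (q / 2 + 1) with hcψdef
  set Cψ : ℝ := 1 + max (q / 2) 1 with hCψdef
  have hcφ : 0 < cφ := lt_min one_pos (by linarith)
  have hCφ : 0 < Cφ := by have := le_max_right q 1; simp only [hCφdef]; linarith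
  have hcψ : 0 < cψ := lt_min one_pos (by linarith)
  have hCψ : 0 < Cψ := by have := le_max_right (q / 2) 1; simp only [hCψdef]; linarith
  refine ⟨min (cφ / Cψ ^ 2) (1 / 2), max (Cφ / cψ ^ 2) 3, lt_min (by positivity) one_half_pos,
    lt_of_lt_of_le three_pos (le_max_right _ _), ?_⟩
  set c : ℝ := min (cφ / Cψ ^ 2) (1 / 2) with hcdef
  set C : ℝ := max (Cφ / cψ ^ 2) 3 with hCdef
  have hc : 0 < c := lt_min (by positivity) one_half_pos
  have hC : 0 < C := lt_of_lt_of_le three_pos (le_max_right _ _)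
  have hc1 : c * Cψ ^ 2 ≤ cφ := by
    have h := min_le_left (cφ / Cψ ^ 2) (1 / 2)
    calc c * Cψ ^ 2 ≤ (cφ / Cψ ^ 2) * Cψ ^ 2 := mul_le_mul_of_nonneg_right h (by positivity)
      _ = cφ := by field_simp
  have hc2 : c ≤ 1 / 2 := min_le_right _ _
  have hC1 : Cφ / cψ ^ 2 ≤ C := le_max_left _ _
  have hC3 : (3:ℝ) ≤ C := le_max_right _ _
  intro δ hδ a b t hb hba ht
  have ha : 0 ≤ a := le_trans hb hba
  have hxa : (0:ℝ) ≤ δ + a := by linarith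
  have hxb : (0:ℝ) ≤ δ + b := by linarith
  set α : ℝ := (δ + a) ^ q with hαdef
  set β : ℝ := (δ + b) ^ q with hβdef
  set γ : ℝ := (δ + a) ^ (q / 2) with hγdef
  set θ : ℝ := (δ + b) ^ (q / 2) with hθdef
  have hα : 0 ≤ α := Real.rpow_nonneg hxa q
  have hβ : 0 ≤ β := Real.rpow_nonneg hxb q
  have hγ : 0 ≤ γ := Real.rpow_nonneg hxa _
  have hθ : 0 ≤ θ := Real.rpow_nonneg hxb _
  have hγsq : γ ^ 2 = α := by
    rw [hγdef, hαdef, ← Real.rpow_natCast ((δ + a) ^ (q / 2)) 2, ← Real.rpow_mul hxa]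
    norm_num
  have hθsq : θ ^ 2 = β := by
    rw [hθdef, hβdef, ← Real.rpow_natCast ((δ + b) ^ (q / 2)) 2, ← Real.rpow_mul hxb]
    norm_num
  -- scalar estimates
  have hφlow := scalar_low hq hδ hb hba (δ := δ)
  have hφup := scalar_up hq hδ hb hba (δ := δ)
  have hψlow := scalar_low hq2 hδ hb hba (δ := δ)
  have hψup := scalar_up hq2 hδ hb hba (δ := δ)
  rw [← hαdef, ← hβdef, ← hcφdef] at hφlow
  rw [← hαdef, ← hβdef] at hφup
  rw [← hγdef, ← hθdef, ← hcψdef] at hψlow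
  rw [← hγdef, ← hθdef] at hψup
  have hφup' : α * a - β * b ≤ Cφ * (α * (a - b)) := by
    rw [hCφdef]; exact hφup
  have hψup' : γ * a - θ * b ≤ Cψ * (γ * (a - b)) := by
    rw [hCψdef]; exact hψup
  have hab : 0 ≤ a - b := by linarith
  have hu0 : 0 ≤ γ * a - θ * b :=
    le_trans (by positivity) hψlow
  have hφ0 : 0 ≤ α * a - β * b :=
    le_trans (by positivity) hφlow
  -- squared ψ estimates
  have hu2low : (cψ * (γ * (a - b))) ^ 2 ≤ (γ * a - θ * b) ^ 2 := by
    have h0 : 0 ≤ cψ * (γ * (a - b)) := by positivity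
    exact pow_le_pow_left₀ h0 hψlow 2
  have hu2up : (γ * a - θ * b) ^ 2 ≤ (Cψ * (γ * (a - b))) ^ 2 :=
    pow_le_pow_left₀ hu0 hψup' 2
  -- endpoint t = a*b
  have hplus_low : c * (γ ^ 2 * a ^ 2 + θ ^ 2 * b ^ 2 - 2 * γ * θ * (a * b))
      ≤ α * a ^ 2 + β * b ^ 2 - (α + β) * (a * b) := by
    have e1 : c * (γ ^ 2 * a ^ 2 + θ ^ 2 * b ^ 2 - 2 * γ * θ * (a * b))
        = c * (γ * a - θ * b) ^ 2 := by ring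
    have e2 : α * a ^ 2 + β * b ^ 2 - (α + β) * (a * b) = (a - b) * (α * a - β * b) := by ring
    rw [e1, e2]
    have h1 : c * (γ * a - θ * b) ^ 2 ≤ c * (Cψ * (γ * (a - b))) ^ 2 :=
      mul_le_mul_of_nonneg_left hu2up hc.le
    have h2 : c * (Cψ * (γ * (a - b))) ^ 2 = (c * Cψ ^ 2) * (γ ^ 2 * (a - b) ^ 2) := by ring
    have h3 : (c * Cψ ^ 2) * (γ ^ 2 * (a - b) ^ 2) ≤ cφ * (γ ^ 2 * (a - b) ^ 2) :=
      mul_le_mul_of_nonneg_right hc1 (by positivity)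
    have h4 : cφ * (γ ^ 2 * (a - b) ^ 2) = (a - b) * (cφ * (α * (a - b))) := by
      rw [hγsq]; ring
    have h5 : (a - b) * (cφ * (α * (a - b))) ≤ (a - b) * (α * a - β * b) :=
      mul_le_mul_of_nonneg_left hφlow hab
    linarith
  have hplus_up : α * a ^ 2 + β * b ^ 2 - (α + β) * (a * b)
      ≤ C * (γ ^ 2 * a ^ 2 + θ ^ 2 * b ^ 2 - 2 * γ * θ * (a * b)) := by
    have e1 : C * (γ ^ 2 * a ^ 2 + θ ^ 2 * b ^ 2 - 2 * γ * θ * (a * b))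
        = C * (γ * a - θ * b) ^ 2 := by ring
    have e2 : α * a ^ 2 + β * b ^ 2 - (α + β) * (a * b) = (a - b) * (α * a - β * b) := by ring
    rw [e1, e2]
    have h1 : (a - b) * (α * a - β * b) ≤ (a - b) * (Cφ * (α * (a - b))) :=
      mul_le_mul_of_nonneg_left hφup' hab
    have hC1' : Cφ ≤ C * cψ ^ 2 := by
      rw [← div_le_iff₀ (by positivity : (0:ℝ) < cψ ^ 2)] at *
      · exact hC1
    have h2 : (a - b) * (Cφ * (α * (a - b))) = Cφ * (γ * (a - b)) ^ 2 := by
      rw [← hγsq]; ring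
    have h3 : Cφ * (γ * (a - b)) ^ 2 ≤ (C * cψ ^ 2) * (γ * (a - b)) ^ 2 :=
      mul_le_mul_of_nonneg_right hC1' (sq_nonneg _)
    have h4 : (C * cψ ^ 2) * (γ * (a - b)) ^ 2 = C * (cψ * (γ * (a - b))) ^ 2 := by ring
    have h5 : C * (cψ * (γ * (a - b))) ^ 2 ≤ C * (γ * a - θ * b) ^ 2 :=
      mul_le_mul_of_nonneg_left hu2low hC.le
    linarith
  -- endpoint t = -(a*b)
  have hβbαa : β * b ≤ α * a := by linarith [hφ0]
  have hθbγa : θ * b ≤ γ * a := by linarith [hu0]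
  have hHm : 0 ≤ γ ^ 2 * a ^ 2 + θ ^ 2 * b ^ 2 + 2 * γ * θ * (a * b) := by
    have : γ ^ 2 * a ^ 2 + θ ^ 2 * b ^ 2 + 2 * γ * θ * (a * b) = (γ * a + θ * b) ^ 2 := by ring
    rw [this]; exact sq_nonneg _
  have hminus_low : c * (γ ^ 2 * a ^ 2 + θ ^ 2 * b ^ 2 - 2 * γ * θ * (-(a * b)))
      ≤ α * a ^ 2 + β * b ^ 2 - (α + β) * (-(a * b)) := by
    have h1 : c * (γ ^ 2 * a ^ 2 + θ ^ 2 * b ^ 2 + 2 * γ * θ * (a * b))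
        ≤ (1/2) * (γ ^ 2 * a ^ 2 + θ ^ 2 * b ^ 2 + 2 * γ * θ * (a * b)) :=
      mul_le_mul_of_nonneg_right hc2 hHm
    have h2 : 2 * γ * θ * (a * b) ≤ γ ^ 2 * a ^ 2 + θ ^ 2 * b ^ 2 := by
      linarith [sq_nonneg (γ * a - θ * b)]
    have h3 : 0 ≤ (α + β) * (a * b) := by positivity
    rw [hγsq, hθsq] at h1 h2 ⊢
    linarith
  have hminus_up : α * a ^ 2 + β * b ^ 2 - (α + β) * (-(a * b))
      ≤ C * (γ ^ 2 * a ^ 2 + θ ^ 2 * b ^ 2 - 2 * γ * θ * (-(a * b))) := by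
    have h1 : α * a * b ≤ α * a * a :=
      mul_le_mul_of_nonneg_left hba (mul_nonneg hα ha)
    have h2 : β * b * a ≤ α * a * a := mul_le_mul_of_nonneg_right hβbαa ha
    have h3 : 0 ≤ 2 * γ * θ * (a * b) := by positivity
    have h4 : 3 * (γ ^ 2 * a ^ 2 + θ ^ 2 * b ^ 2 + 2 * γ * θ * (a * b))
        ≤ C * (γ ^ 2 * a ^ 2 + θ ^ 2 * b ^ 2 + 2 * γ * θ * (a * b)) :=
      mul_le_mul_of_nonneg_right hC3 hHm
    rw [hγsq, hθsq] at h4 ⊢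
    linarith [h1, h2, h3, h4, mul_nonneg hβ (sq_nonneg b)]
  constructor
  · have h := affine_nonneg (A := (α * a ^ 2 + β * b ^ 2) - c * (γ ^ 2 * a ^ 2 + θ ^ 2 * b ^ 2))
      (B := (α + β) - c * (2 * γ * θ)) (e := a * b) (t := t) ht
      (by linarith [hplus_low]) (by linarith [hminus_low])
    linarith [h]
  · have h := affine_nonneg (A := C * (γ ^ 2 * a ^ 2 + θ ^ 2 * b ^ 2) - (α * a ^ 2 + β * b ^ 2))
      (B := C * (2 * γ * θ) - (α + β)) (e := a * b) (t := t) ht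
      (by linarith [hplus_up]) (by linarith [hminus_up])
    linarith [h]

section MatrixLemmas

open Matrix

variable {d : ℕ}

lemma frob_nonneg (A : Matrix (Fin d) (Fin d) ℝ) : 0 ≤ frob A := Real.sqrt_nonneg _

lemma frob_sq (A : Matrix (Fin d) (Fin d) ℝ) : frob A ^ 2 = frobInner A A := by
  unfold frob frobInner
  rw [Real.sq_sqrt (by positivity)]
  simp [sq]

lemma frobInner_comm (A B : Matrix (Fin d) (Fin d) ℝ) : frobInner A B = frobInner B A := by
  simp [frobInner, mul_comm]

lemma frobInner_neg_neg (A B : Matrix (Fin d) (Fin d) ℝ) :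
    frobInner (-A) (-B) = frobInner A B := by
  simp [frobInner]

lemma frob_neg (A : Matrix (Fin d) (Fin d) ℝ) : frob (-A) = frob A := by
  simp [frob]

lemma frobInner_expand (r s : ℝ) (P Q X Y : Matrix (Fin d) (Fin d) ℝ) :
    frobInner (r • P - s • Q) (X - Y)
      = r * frobInner P X - r * frobInner P Y - s * frobInner Q X + s * frobInner Q Y := by
  simp only [frobInner, Matrix.sub_apply, Matrix.smul_apply, smul_eq_mul, Finset.mul_sum,
    ← Finset.sum_sub_distrib, ← Finset.sum_add_distrib]
  exact Finset.sum_congr rfl fun i _ => Finset.sum_congr rfl fun j _ => by ring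

lemma frob_comb_sq (r s : ℝ) (P Q : Matrix (Fin d) (Fin d) ℝ) :
    frob (r • P - s • Q) ^ 2
      = r ^ 2 * frobInner P P + s ^ 2 * frobInner Q Q - 2 * r * s * frobInner P Q := by
  rw [frob_sq]
  have : r • P - s • Q = r • P - s • Q := rfl
  rw [show (r • P - s • Q : Matrix (Fin d) (Fin d) ℝ) = (r • P) - (s • Q) from rfl]
  have h := frobInner_expand r s P Q (r • P) (s • Q)
  rw [h]
  have h1 : frobInner P (r • P) = r * frobInner P P := by
    simp [frobInner, Finset.mul_sum]; exact Finset.sum_congr rfl fun i _ =>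
      Finset.sum_congr rfl fun j _ => by ring
  have h2 : frobInner P (s • Q) = s * frobInner P Q := by
    simp [frobInner, Finset.mul_sum]; exact Finset.sum_congr rfl fun i _ =>
      Finset.sum_congr rfl fun j _ => by ring
  have h3 : frobInner Q (r • P) = r * frobInner P Q := by
    rw [frobInner_comm]
    simp [frobInner, Finset.mul_sum]; exact Finset.sum_congr rfl fun i _ =>
      Finset.sum_congr rfl fun j _ => by ring
  have h4 : frobInner Q (s • Q) = s * frobInner Q Q := by
    simp [frobInner, Finset.mul_sum]; exact Finset.sum_congr rfl fun i _ =>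
      Finset.sum_congr rfl fun j _ => by ring
  rw [h1, h2, h3, h4]
  ring

lemma msym_transpose (A : Matrix (Fin d) (Fin d) ℝ) : (msym A)ᵀ = msym A := by
  ext i j
  simp [msym, Matrix.transpose_apply, Matrix.add_apply, Matrix.smul_apply, smul_eq_mul]
  ring

lemma msym_sub (A B : Matrix (Fin d) (Fin d) ℝ) : msym (A - B) = msym A - msym B := by
  ext i j
  simp [msym, Matrix.transpose_apply, Matrix.sub_apply, Matrix.add_apply, Matrix.smul_apply,
    smul_eq_mul]
  ring

lemma frobInner_msym_right (M N : Matrix (Fin d) (Fin d) ℝ) (hM : Mᵀ = M) :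
    frobInner M (msym N) = frobInner M N := by
  have hswap : ∑ i, ∑ j, M i j * N j i = ∑ i, ∑ j, M i j * N i j := by
    rw [Finset.sum_comm]
    refine Finset.sum_congr rfl fun j _ => Finset.sum_congr rfl fun i _ => ?_
    have hMij : M i j = M j i := by
      conv_lhs => rw [← hM]
      exact Matrix.transpose_apply M i j
    rw [hMij]
  have expand : frobInner M (msym N)
      = (1/2) * (∑ i, ∑ j, M i j * N i j) + (1/2) * (∑ i, ∑ j, M i j * N j i) := by
    simp only [frobInner, msym, Matrix.smul_apply, Matrix.add_apply, Matrix.transpose_apply,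
      smul_eq_mul, Finset.mul_sum, ← Finset.sum_add_distrib]
    exact Finset.sum_congr rfl fun i _ => Finset.sum_congr rfl fun j _ => by ring
  rw [expand, hswap]
  simp only [frobInner]
  ring

lemma frobInner_cauchy (P Q : Matrix (Fin d) (Fin d) ℝ) :
    |frobInner P Q| ≤ frob P * frob Q := by
  have h : (frobInner P Q) ^ 2 ≤ frobInner P P * frobInner Q Q := by
    have h0 : ∀ X Y : Matrix (Fin d) (Fin d) ℝ,
        frobInner X Y = ∑ x : Fin d × Fin d, X x.1 x.2 * Y x.1 x.2 := by
      intro X Y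
      rw [Fintype.sum_prod_type]
      rfl
    rw [h0, h0, h0]
    have := Finset.sum_mul_sq_le_sq_mul_sq Finset.univ
      (fun x : Fin d × Fin d => P x.1 x.2) (fun x => Q x.1 x.2)
    calc (∑ x : Fin d × Fin d, P x.1 x.2 * Q x.1 x.2) ^ 2
        ≤ (∑ x : Fin d × Fin d, P x.1 x.2 ^ 2) * ∑ x : Fin d × Fin d, Q x.1 x.2 ^ 2 := this
      _ = (∑ x : Fin d × Fin d, P x.1 x.2 * P x.1 x.2)
          * ∑ x : Fin d × Fin d, Q x.1 x.2 * Q x.1 x.2 := by simp [sq]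
  have h2 : (frobInner P Q) ^ 2 ≤ (frob P * frob Q) ^ 2 := by
    rw [mul_pow, frob_sq, frob_sq]
    exact h
  have h3 : |frobInner P Q| = Real.sqrt ((frobInner P Q) ^ 2) := (Real.sqrt_sq_eq_abs _).symm
  rw [h3, show frob P * frob Q = Real.sqrt ((frob P * frob Q) ^ 2) from
    (Real.sqrt_sq (mul_nonneg (frob_nonneg P) (frob_nonneg Q))).symm]
  exact Real.sqrt_le_sqrt h2

end MatrixLemmas

open Matrix in
set_option maxHeartbeats 1000000 in
/-- the natural equivalence `(S(A)-S(B)) : (A-B) ∼ |F(A)-F(B)|²`, with constants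
depending only on `p` (not on `δ`). -/
theorem hammer_S_F_equivalence (p : ℝ) (hp : 1 < p) :
    ∃ c C : ℝ, 0 < c ∧ 0 < C ∧
      ∀ (δ : ℝ), 0 ≤ δ → ∀ (d : ℕ) (A B : Matrix (Fin d) (Fin d) ℝ),
        c * frob (Fmap δ p A - Fmap δ p B) ^ 2 ≤
            frobInner (Smap δ p A - Smap δ p B) (A - B) ∧
        frobInner (Smap δ p A - Smap δ p B) (A - B) ≤
            C * frob (Fmap δ p A - Fmap δ p B) ^ 2 := by
  obtain ⟨c, C, hc, hC, hcore⟩ := core_SF p hp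
  refine ⟨c, C, hc, hC, ?_⟩
  intro δ hδ d A B
  -- it suffices to treat the case `frob (msym B) ≤ frob (msym A)`
  suffices key : ∀ A B : Matrix (Fin d) (Fin d) ℝ, frob (msym B) ≤ frob (msym A) →
      (c * frob (Fmap δ p A - Fmap δ p B) ^ 2 ≤
          frobInner (Smap δ p A - Smap δ p B) (A - B) ∧
        frobInner (Smap δ p A - Smap δ p B) (A - B) ≤
          C * frob (Fmap δ p A - Fmap δ p B) ^ 2) by
    rcases le_total (frob (msym B)) (frob (msym A)) with h | h
    · exact key A B h
    · obtain ⟨h1, h2⟩ := key B A h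
      have e1 : frobInner (Smap δ p A - Smap δ p B) (A - B)
          = frobInner (Smap δ p B - Smap δ p A) (B - A) := by
        rw [show Smap δ p A - Smap δ p B = -(Smap δ p B - Smap δ p A) by rw [neg_sub],
          show A - B = -(B - A) by rw [neg_sub], frobInner_neg_neg]
      have e2 : frob (Fmap δ p A - Fmap δ p B) = frob (Fmap δ p B - Fmap δ p A) := by
        rw [show Fmap δ p A - Fmap δ p B = -(Fmap δ p B - Fmap δ p A) by rw [neg_sub], frob_neg]
      rw [e1, e2]
      exact ⟨h1, h2⟩
  clear A B
  intro A B hba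
  set P : Matrix (Fin d) (Fin d) ℝ := msym A with hPdef
  set Q : Matrix (Fin d) (Fin d) ℝ := msym B with hQdef
  set a : ℝ := frob P with hadef
  set b : ℝ := frob Q with hbdef
  set t : ℝ := frobInner P Q with htdef
  have hb0 : 0 ≤ b := frob_nonneg Q
  have hcs : |t| ≤ a * b := frobInner_cauchy P Q
  -- coefficients
  set α : ℝ := (δ + a) ^ (p - 2) with hαdef
  set β : ℝ := (δ + b) ^ (p - 2) with hβdef
  set γ : ℝ := (δ + a) ^ ((p - 2) / 2) with hγdef
  set θ : ℝ := (δ + b) ^ ((p - 2) / 2) with hθdef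
  have hSA : Smap δ p A = α • P := rfl
  have hSB : Smap δ p B = β • Q := rfl
  have hFA : Fmap δ p A = γ • P := rfl
  have hFB : Fmap δ p B = θ • Q := rfl
  have hMsym : (α • P - β • Q)ᵀ = α • P - β • Q := by
    rw [Matrix.transpose_sub, Matrix.transpose_smul, Matrix.transpose_smul,
      hPdef, hQdef, msym_transpose, msym_transpose]
  -- compute the inner product
  have eS : frobInner (Smap δ p A - Smap δ p B) (A - B)
      = α * a ^ 2 + β * b ^ 2 - (α + β) * t := by
    rw [hSA, hSB]
    have e0 : frobInner (α • P - β • Q) (A - B) = frobInner (α • P - β • Q) (P - Q) := by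
      rw [← frobInner_msym_right _ _ hMsym, msym_sub, ← hPdef, ← hQdef]
    rw [e0, frobInner_expand, frobInner_comm Q P, ← frob_sq, ← frob_sq,
      ← hadef, ← hbdef, ← htdef]
    ring
  -- compute the F-difference norm
  have eF : frob (Fmap δ p A - Fmap δ p B) ^ 2
      = γ ^ 2 * a ^ 2 + θ ^ 2 * b ^ 2 - 2 * γ * θ * t := by
    rw [hFA, hFB, frob_comb_sq, ← frob_sq, ← frob_sq, ← hadef, ← hbdef, ← htdef]
  obtain ⟨hlow, hup⟩ := hcore δ hδ a b t hb0 hba hcs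
  rw [← hαdef, ← hβdef, ← hγdef, ← hθdef] at hlow hup
  rw [eS, eF]
  exact ⟨hlow, hup⟩
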